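/- Let f : ℝ → ℝ be twice continuously differentiable with f and its derivatives of polynomial growth, and let Z ~ N(μ, v) with v > 0. Then ∂/∂v E[f(Z)] = (1/2) E[f''(Z)] (one-dimensional Price theorem). -/

import Mathlib

/-!
The Gaussian density solves the heat equation `∂_v φ = ½ ∂_z² φ`. Differentiating under the
integral sign (on `v/2 < w < 3v/2` the integrand's `w`-derivative is dominated by a polynomial
times the density of variance `3v/2`) and then integrating by parts twice moves both
`z`-derivatives onto `f`. Polynomial growth makes every product integrable, because a Gaussian has
moments of all orders.
-/

open Real

/-- One-dimensional Gaussian density with mean `μ` and variance `v`. -/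
noncomputable def gaussDensityV (z μ v : ℝ) : ℝ :=
  (1 / Real.sqrt (2 * π * v)) * Real.exp (-(z - μ) ^ 2 / (2 * v))

open MeasureTheory ProbabilityTheory Filter Set
open scoped NNReal ENNReal

@[fun_prop]
def HasPolyGrowth (g : ℝ → ℝ) : Prop :=
  ∃ C : ℝ, ∃ n : ℕ, ∀ z, |g z| ≤ C * (1 + |z|) ^ n

namespace HasPolyGrowth

variable {f g : ℝ → ℝ}

lemma mono (hg : HasPolyGrowth g) (h : ∀ z, |f z| ≤ |g z|) : HasPolyGrowth f := by
  obtain ⟨C, n, hC⟩ := hg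
  exact ⟨C, n, fun z => (h z).trans (hC z)⟩

@[fun_prop]
lemma const (c : ℝ) : HasPolyGrowth fun _ => c :=
  ⟨|c|, 0, fun _ => by simp⟩

@[fun_prop]
lemma id : HasPolyGrowth fun z => z :=
  ⟨1, 1, fun z => by simp⟩

lemma abs_add_abs (hf : HasPolyGrowth f) (hg : HasPolyGrowth g) :
    HasPolyGrowth fun z => |f z| + |g z| := by
  obtain ⟨C, n, hC⟩ := hf
  obtain ⟨D, m, hD⟩ := hg
  refine ⟨|C| + |D|, n + m, fun z => ?_⟩
  have h1 : 1 ≤ 1 + |z| := le_add_of_nonneg_right (abs_nonneg z)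
  have hn : C * (1 + |z|) ^ n ≤ |C| * (1 + |z|) ^ (n + m) :=
    mul_le_mul (le_abs_self C) (pow_le_pow_right₀ h1 (by omega)) (by positivity) (abs_nonneg C)
  have hm : D * (1 + |z|) ^ m ≤ |D| * (1 + |z|) ^ (n + m) :=
    mul_le_mul (le_abs_self D) (pow_le_pow_right₀ h1 (by omega)) (by positivity) (abs_nonneg D)
  rw [abs_of_nonneg (by positivity)]
  linarith [hC z, hD z]

@[fun_prop]
lemma add (hf : HasPolyGrowth f) (hg : HasPolyGrowth g) : HasPolyGrowth fun z => f z + g z :=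
  (hf.abs_add_abs hg).mono fun _ => (abs_add_le _ _).trans (le_abs_self _)

@[fun_prop]
lemma sub (hf : HasPolyGrowth f) (hg : HasPolyGrowth g) : HasPolyGrowth fun z => f z - g z :=
  (hf.abs_add_abs hg).mono fun _ => (abs_sub _ _).trans (le_abs_self _)

@[fun_prop]
lemma neg (hf : HasPolyGrowth f) : HasPolyGrowth fun z => -f z :=
  hf.mono fun _ => (abs_neg _).le

@[fun_prop]
lemma abs (hf : HasPolyGrowth f) : HasPolyGrowth fun z => |f z| :=
  hf.mono fun _ => (abs_abs _).le

@[fun_prop]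
lemma mul (hf : HasPolyGrowth f) (hg : HasPolyGrowth g) : HasPolyGrowth fun z => f z * g z := by
  obtain ⟨C, n, hC⟩ := hf
  obtain ⟨D, m, hD⟩ := hg
  refine ⟨C * D, n + m, fun z => ?_⟩
  rw [abs_mul, pow_add, mul_mul_mul_comm]
  exact mul_le_mul (hC z) (hD z) (abs_nonneg _) ((abs_nonneg _).trans (hC z))

@[fun_prop]
lemma div_const (hf : HasPolyGrowth f) (c : ℝ) : HasPolyGrowth fun z => f z / c := by
  simpa only [div_eq_mul_inv] using hf.mul (const c⁻¹)

@[fun_prop]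
lemma pow (hf : HasPolyGrowth f) (n : ℕ) : HasPolyGrowth fun z => f z ^ n := by
  induction n with
  | zero => simpa using const 1
  | succ n ih => simpa only [pow_succ] using ih.mul hf

lemma integrable_gaussianReal (hpg : HasPolyGrowth g) {μ : ℝ} {v : ℝ≥0}
    (hg : AEStronglyMeasurable g (gaussianReal μ v)) : Integrable g (gaussianReal μ v) := by
  obtain ⟨C, n, hC⟩ := hpg
  have hid : MemLp (fun z : ℝ => z) (n : ℝ≥0∞) (gaussianReal μ v) :=
    memLp_id_gaussianReal' n (ENNReal.natCast_ne_top n)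
  have hmoment : MemLp (fun z : ℝ => 1 + ‖z‖) (n : ℝ≥0∞) (gaussianReal μ v) :=
    (memLp_const (1 : ℝ)).add hid.norm
  refine (hmoment.integrable_norm_pow'.const_mul C).mono' hg (ae_of_all _ fun z => ?_)
  simpa [abs_of_nonneg (by positivity : (0:ℝ) ≤ 1 + |z|)] using hC z

end HasPolyGrowth

lemma hasPolyGrowth_of_abs_le_rpow {g : ℝ → ℝ} (hg : Continuous g) {C k : ℝ}
    (h : ∀ z, |g z| ≤ C * (1 + |z| ^ k)) : HasPolyGrowth g := by
  -- For `k < 0` the hypothesis is useless near `0`; there `g` is bounded by compactness instead.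
  obtain ⟨M, hM⟩ :=
    (isCompact_closedBall (0 : ℝ) 1).exists_bound_of_continuousOn hg.continuousOn
  refine ⟨M + 2 * |C|, ⌈k⌉₊, fun z => ?_⟩
  have hM0 : 0 ≤ M := (norm_nonneg _).trans (hM 0 (Metric.mem_closedBall_self zero_le_one))
  have hone : 1 ≤ (1 + |z|) ^ ⌈k⌉₊ := one_le_pow₀ (le_add_of_nonneg_right (abs_nonneg z))
  rcases le_total |z| 1 with hz | hz
  · have hgz : |g z| ≤ M := by simpa using hM z (by simpa using hz)
    nlinarith [abs_nonneg C]
  · have hrpow : |z| ^ k ≤ (1 + |z|) ^ ⌈k⌉₊ := by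
      calc |z| ^ k ≤ |z| ^ (⌈k⌉₊ : ℝ) :=
            Real.rpow_le_rpow_of_exponent_le hz (Nat.le_ceil k)
        _ = |z| ^ ⌈k⌉₊ := Real.rpow_natCast _ _
        _ ≤ (1 + |z|) ^ ⌈k⌉₊ := by gcongr; linarith
    have hCk : C * (1 + |z| ^ k) ≤ |C| * (2 * (1 + |z|) ^ ⌈k⌉₊) :=
      mul_le_mul (le_abs_self C) (by linarith) (by positivity) (abs_nonneg C)
    nlinarith [h z]

noncomputable def gaussDensityV' (z μ v : ℝ) : ℝ := -(z - μ) / v * gaussDensityV z μ v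

noncomputable def gaussDensityV'' (z μ v : ℝ) : ℝ :=
  ((z - μ) ^ 2 / v ^ 2 - 1 / v) * gaussDensityV z μ v

lemma hasDerivAt_gaussDensityV (μ v z : ℝ) :
    HasDerivAt (gaussDensityV · μ v) (gaussDensityV' z μ v) z := by
  have hexp : HasDerivAt (fun z => -(z - μ) ^ 2 / (2 * v)) (-(z - μ) / v) z :=
    ((((hasDerivAt_id z).sub_const μ).pow 2).neg.div_const (2 * v)).congr_deriv
      (by simp only [Nat.cast_ofNat, id_eq, Nat.add_one_sub_one, pow_one, mul_one]; ring)
  refine (((Real.hasDerivAt_exp _).comp z hexp).const_mul (1 / √(2 * π * v))).congr_deriv ?_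
  simp only [gaussDensityV', gaussDensityV]
  ring

lemma hasDerivAt_gaussDensityV' (μ v z : ℝ) :
    HasDerivAt (gaussDensityV' · μ v) (gaussDensityV'' z μ v) z := by
  refine ((((hasDerivAt_id z).sub_const μ).neg.div_const v).mul
    (hasDerivAt_gaussDensityV μ v z)).congr_deriv ?_
  simp only [gaussDensityV'', gaussDensityV', Pi.neg_apply, id]
  ring

lemma hasDerivAt_gaussDensityV_variance (z μ : ℝ) {w : ℝ} (hw : 0 < w) :
    HasDerivAt (gaussDensityV z μ ·) (gaussDensityV'' z μ w / 2) w := by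
  have h2πw : 0 < 2 * π * w := by positivity
  have hsqrt :
      HasDerivAt (fun w => (√(2 * π * w))⁻¹) (-(1 / (2 * w)) * (√(2 * π * w))⁻¹) w := by
    have := (((hasDerivAt_id w).const_mul (2 * π)).sqrt h2πw.ne').inv (Real.sqrt_pos.2 h2πw).ne'
    refine this.congr_deriv ?_
    have hs : √(2 * π * w) ^ 2 = 2 * π * w := Real.sq_sqrt h2πw.le
    simp only [id, mul_one]
    field_simp
    rw [hs]
  have hexp : HasDerivAt (fun w => -(z - μ) ^ 2 / (2 * w)) ((z - μ) ^ 2 / (2 * w ^ 2)) w := by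
    have := (((hasDerivAt_id w).const_mul 2).inv (by positivity)).const_mul (-(z - μ) ^ 2)
    refine this.congr_deriv ?_
    simp only [id]
    field_simp
  have := hsqrt.mul ((Real.hasDerivAt_exp _).comp w hexp)
  simp only [gaussDensityV, one_div] at this ⊢
  refine this.congr_deriv ?_
  simp only [gaussDensityV'', gaussDensityV, Function.comp_apply]
  field_simp
  ring

lemma continuous_gaussDensityV (μ v : ℝ) : Continuous (gaussDensityV · μ v) :=
  continuous_iff_continuousAt.2 fun z => (hasDerivAt_gaussDensityV μ v z).continuousAt

lemma gaussDensityV_nonneg (z μ v : ℝ) : 0 ≤ gaussDensityV z μ v := by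
  unfold gaussDensityV
  positivity

lemma HasPolyGrowth.integrable_mul_gaussDensityV {g : ℝ → ℝ} (hpg : HasPolyGrowth g)
    (hg : AEStronglyMeasurable g) (μ : ℝ) {w : ℝ} (hw : 0 < w) :
    Integrable fun z => g z * gaussDensityV z μ w := by
  set v : ℝ≥0 := ⟨w, hw.le⟩
  have hv : v ≠ 0 := ne_of_gt hw
  have := hpg.integrable_gaussianReal (hg.mono_ac (gaussianReal_absolutelyContinuous μ hv))
  rw [gaussianReal_of_var_ne_zero μ hv, integrable_withDensity_iff_integrable_smul'
    (measurable_gaussianPDF μ v) (ae_of_all _ fun _ => gaussianPDF_lt_top)] at this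
  refine this.congr (ae_of_all _ fun z => ?_)
  beta_reduce
  rw [smul_eq_mul, toReal_gaussianPDF, mul_comm, gaussianPDFReal, gaussDensityV, one_div]
  rfl

lemma HasPolyGrowth.integrable_mul_gaussDensityV' {g : ℝ → ℝ} (hpg : HasPolyGrowth g)
    (hg : AEStronglyMeasurable g) (μ : ℝ) {w : ℝ} (hw : 0 < w) :
    Integrable fun z => g z * gaussDensityV' z μ w := by
  have hpoly : HasPolyGrowth fun z => g z * (-(z - μ) / w) := by fun_prop
  simpa only [gaussDensityV', mul_assoc] using
    hpoly.integrable_mul_gaussDensityV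
      (hg.mul (by fun_prop : Continuous _).aestronglyMeasurable) μ hw

lemma HasPolyGrowth.integrable_mul_gaussDensityV'' {g : ℝ → ℝ} (hpg : HasPolyGrowth g)
    (hg : AEStronglyMeasurable g) (μ : ℝ) {w : ℝ} (hw : 0 < w) :
    Integrable fun z => g z * gaussDensityV'' z μ w := by
  have hpoly : HasPolyGrowth fun z => g z * ((z - μ) ^ 2 / w ^ 2 - 1 / w) := by fun_prop
  simpa only [gaussDensityV'', mul_assoc] using
    hpoly.integrable_mul_gaussDensityV
      (hg.mul (by fun_prop : Continuous _).aestronglyMeasurable) μ hw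

lemma gaussDensityV_le_sqrt_mul {z μ w w' c : ℝ} (hw : 0 < w) (hww' : w ≤ w')
    (hc : w' ≤ c * w) :
    gaussDensityV z μ w ≤ √c * gaussDensityV z μ w' := by
  have hw' : 0 < w' := hw.trans_le hww'
  have hnorm : 1 / √(2 * π * w) ≤ √c * (1 / √(2 * π * w')) := by
    rw [mul_one_div, div_le_div_iff₀ (by positivity) (by positivity), one_mul, ← Real.sqrt_mul']
    · exact Real.sqrt_le_sqrt (by nlinarith [Real.pi_pos])
    · positivity
  have hexp : rexp (-(z - μ) ^ 2 / (2 * w)) ≤ rexp (-(z - μ) ^ 2 / (2 * w')) := by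
    rw [Real.exp_le_exp, neg_div, neg_div, neg_le_neg_iff]
    gcongr
  unfold gaussDensityV
  rw [← mul_assoc]
  gcongr

lemma abs_gaussDensityV''_le {z μ v w : ℝ} (hv : 0 < v) (hw : v / 2 ≤ w)
    (hw' : w ≤ 3 * v / 2) :
    |gaussDensityV'' z μ w| ≤
      √3 * (4 * (z - μ) ^ 2 / v ^ 2 + 2 / v) * gaussDensityV z μ (3 * v / 2) := by
  have hw0 : 0 < w := by linarith
  have hpoly : |(z - μ) ^ 2 / w ^ 2 - 1 / w| ≤ 4 * (z - μ) ^ 2 / v ^ 2 + 2 / v := by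
    have h1 : (z - μ) ^ 2 / w ^ 2 ≤ 4 * (z - μ) ^ 2 / v ^ 2 := by
      rw [div_le_div_iff₀ (by positivity) (by positivity)]
      nlinarith [sq_nonneg (z - μ), mul_le_mul hw hw (by positivity) hw0.le]
    have h2 : 1 / w ≤ 2 / v := by
      rw [div_le_div_iff₀ hw0 hv]; linarith
    refine (abs_sub _ _).trans ?_
    rw [abs_of_nonneg (by positivity), abs_of_nonneg (by positivity)]
    linarith
  have hdens := gaussDensityV_le_sqrt_mul (z := z) (μ := μ) hw0 hw' (c := 3) (by linarith)
  rw [gaussDensityV'', abs_mul, abs_of_nonneg (gaussDensityV_nonneg z μ w)]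
  calc _ ≤ (4 * (z - μ) ^ 2 / v ^ 2 + 2 / v) * (√3 * gaussDensityV z μ (3 * v / 2)) :=
        mul_le_mul hpoly hdens (gaussDensityV_nonneg z μ w) (by positivity)
    _ = _ := by ring

theorem hasDerivAt_integral_mul_gaussDensityV {g : ℝ → ℝ} (hg : Continuous g)
    (hpg : HasPolyGrowth g) (μ : ℝ) {v : ℝ} (hv : 0 < v) :
    HasDerivAt (fun w => ∫ z, g z * gaussDensityV z μ w)
      ((∫ z, g z * gaussDensityV'' z μ v) / 2) v := by
  have hbound : HasPolyGrowth fun z => |g z| * (√3 * (4 * (z - μ) ^ 2 / v ^ 2 + 2 / v)) := by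
    fun_prop
  have key := hasDerivAt_integral_of_dominated_loc_of_deriv_le (μ := volume)
    (F := fun w z => g z * gaussDensityV z μ w)
    (F' := fun w z => g z * (gaussDensityV'' z μ w / 2))
    (s := Ioo (v / 2) (3 * v / 2))
    (bound := fun z => |g z| * (√3 * (4 * (z - μ) ^ 2 / v ^ 2 + 2 / v)) *
      gaussDensityV z μ (3 * v / 2))
    (Ioo_mem_nhds (by linarith) (by linarith))
    (Eventually.of_forall fun w => (hg.mul (continuous_gaussDensityV μ w)).aestronglyMeasurable)
    (hpg.integrable_mul_gaussDensityV hg.aestronglyMeasurable μ hv)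
    (by simpa only [mul_div_assoc] using
      ((hpg.integrable_mul_gaussDensityV'' hg.aestronglyMeasurable μ hv).div_const 2).1)
    (ae_of_all _ fun z w hw => ?_)
    (hbound.integrable_mul_gaussDensityV (by fun_prop) μ (by positivity))
    (ae_of_all _ fun z w hw =>
      (hasDerivAt_gaussDensityV_variance z μ (by linarith [hw.1])).const_mul (g z))
  · rw [← integral_div]
    simpa only [mul_div_assoc] using key.2
  · calc ‖g z * (gaussDensityV'' z μ w / 2)‖ = |g z| * (|gaussDensityV'' z μ w| / 2) := by
          rw [Real.norm_eq_abs, abs_mul, abs_div, abs_two]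
      _ ≤ |g z| * |gaussDensityV'' z μ w| := by gcongr; exact half_le_self (abs_nonneg _)
      _ ≤ |g z| * (√3 * (4 * (z - μ) ^ 2 / v ^ 2 + 2 / v) * gaussDensityV z μ (3 * v / 2)) :=
          mul_le_mul_of_nonneg_left (abs_gaussDensityV''_le hv hw.1.le hw.2.le) (abs_nonneg _)
      _ = _ := by ring

theorem integral_mul_gaussDensityV' {u u' : ℝ → ℝ} (hu : ∀ z, HasDerivAt u (u' z) z)
    (hu' : AEStronglyMeasurable u') (hpu : HasPolyGrowth u) (hpu' : HasPolyGrowth u') (μ : ℝ)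
    {w : ℝ} (hw : 0 < w) :
    ∫ z, u z * gaussDensityV' z μ w = -∫ z, u' z * gaussDensityV z μ w :=
  have hu_meas : AEStronglyMeasurable u :=
    (continuous_iff_continuousAt.2 fun z => (hu z).continuousAt).aestronglyMeasurable
  integral_mul_deriv_eq_deriv_mul_of_integrable (fun z _ => hu z)
    (fun z _ => hasDerivAt_gaussDensityV μ w z) (hpu.integrable_mul_gaussDensityV' hu_meas μ hw)
    (hpu'.integrable_mul_gaussDensityV hu' μ hw) (hpu.integrable_mul_gaussDensityV hu_meas μ hw)

theorem integral_mul_gaussDensityV'' {u u' : ℝ → ℝ} (hu : ∀ z, HasDerivAt u (u' z) z)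
    (hu' : AEStronglyMeasurable u') (hpu : HasPolyGrowth u) (hpu' : HasPolyGrowth u') (μ : ℝ)
    {w : ℝ} (hw : 0 < w) :
    ∫ z, u z * gaussDensityV'' z μ w = -∫ z, u' z * gaussDensityV' z μ w :=
  have hu_meas : AEStronglyMeasurable u :=
    (continuous_iff_continuousAt.2 fun z => (hu z).continuousAt).aestronglyMeasurable
  integral_mul_deriv_eq_deriv_mul_of_integrable (fun z _ => hu z)
    (fun z _ => hasDerivAt_gaussDensityV' μ w z) (hpu.integrable_mul_gaussDensityV'' hu_meas μ hw)
    (hpu'.integrable_mul_gaussDensityV' hu' μ hw) (hpu.integrable_mul_gaussDensityV' hu_meas μ hw)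

/-- One-dimensional Price theorem: the derivative of the Gaussian expectation with
respect to the variance equals half the expectation of the second derivative. -/
theorem price_theorem (f : ℝ → ℝ) (hf : ContDiff ℝ 2 f)
    (hgrowth : ∃ C k : ℝ, ∀ z : ℝ,
      |f z| ≤ C * (1 + |z| ^ k) ∧ |deriv f z| ≤ C * (1 + |z| ^ k) ∧
        |deriv (deriv f) z| ≤ C * (1 + |z| ^ k))
    (μ v : ℝ) (hv : 0 < v) :
    deriv (fun w : ℝ => ∫ z : ℝ, f z * gaussDensityV z μ w) v =
      (1 / 2) * ∫ z : ℝ, deriv (deriv f) z * gaussDensityV z μ v := by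
  obtain ⟨C, k, hbound⟩ := hgrowth
  have hf' : ContDiff ℝ 1 (deriv f) := hf.deriv'
  have hpf := hasPolyGrowth_of_abs_le_rpow hf.continuous fun z => (hbound z).1
  have hpf' := hasPolyGrowth_of_abs_le_rpow hf'.continuous fun z => (hbound z).2.1
  have hpf'' := hasPolyGrowth_of_abs_le_rpow hf'.continuous_deriv_one fun z => (hbound z).2.2
  rw [(hasDerivAt_integral_mul_gaussDensityV hf.continuous hpf μ hv).deriv,
    integral_mul_gaussDensityV'' (fun z => (hf.differentiable two_ne_zero z).hasDerivAt)
      hf'.continuous.aestronglyMeasurable hpf hpf' μ hv,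
    integral_mul_gaussDensityV' (fun z => (hf'.differentiable one_ne_zero z).hasDerivAt)
      hf'.continuous_deriv_one.aestronglyMeasurable hpf' hpf'' μ hv]
  ring
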